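/- Let G and H be (finite, nonempty) graphs with maximum degrees Δ(G) and Δ(H). If Δ(G) = Δ(H), then the odd Hadwiger number of the lexicographic product satisfies oh(G ∘ H) ≥ Δ(G) + 1; if Δ(G) ≠ Δ(H), then oh(G ∘ H) ≥ min{Δ(G), Δ(H)} + 2. -/

import Mathlib

open SimpleGraph

/-- `H` is an odd minor of `G`: there are pairwise vertex-disjoint subtrees of `G`, one for
each vertex of `H`, and a 2-colouring of the vertices which is proper on each tree, such that
for every edge of `H` there is a monochromatic edge of `G` between the corresponding trees. -/
def IsOddMinorOf {W V : Type*} (H : SimpleGraph W) (G : SimpleGraph V) : Prop :=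
  ∃ (T : W → G.Subgraph) (c : V → Fin 2),
    (∀ w, (T w).coe.IsTree) ∧
    (Pairwise fun w w' => Disjoint (T w).verts (T w').verts) ∧
    (∀ w, ∀ x y, (T w).Adj x y → c x ≠ c y) ∧
    (∀ w w', H.Adj w w' →
      ∃ x y, x ∈ (T w).verts ∧ y ∈ (T w').verts ∧ G.Adj x y ∧ c x = c y)

/-- The odd Hadwiger number of `G`: the largest `r` such that `K_r` is an odd minor of `G`. -/
noncomputable def oddHadwiger {V : Type*} [Fintype V] (G : SimpleGraph V) : ℕ :=
  sSup {r : ℕ | IsOddMinorOf (⊤ : SimpleGraph (Fin r)) G}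

/-- The Cartesian product `G □ H`. -/
def cartProd {α β : Type*} (G : SimpleGraph α) (H : SimpleGraph β) : SimpleGraph (α × β) where
  Adj x y := (x.1 = y.1 ∧ H.Adj x.2 y.2) ∨ (x.2 = y.2 ∧ G.Adj x.1 y.1)
  symm := by
    constructor
    rintro x y (⟨h1, h2⟩ | ⟨h1, h2⟩)
    · exact Or.inl ⟨h1.symm, h2.symm⟩
    · exact Or.inr ⟨h1.symm, h2.symm⟩
  loopless := by
    constructor
    rintro x (⟨_, h⟩ | ⟨_, h⟩)
    · exact H.irrefl h
    · exact G.irrefl h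

/-- The strong product `G ⊠ H`. -/
def strongProd {α β : Type*} (G : SimpleGraph α) (H : SimpleGraph β) : SimpleGraph (α × β) where
  Adj x y := (x.1 = y.1 ∧ H.Adj x.2 y.2) ∨ (x.2 = y.2 ∧ G.Adj x.1 y.1) ∨
    (G.Adj x.1 y.1 ∧ H.Adj x.2 y.2)
  symm := by
    constructor
    rintro x y (⟨h1, h2⟩ | ⟨h1, h2⟩ | ⟨h1, h2⟩)
    · exact Or.inl ⟨h1.symm, h2.symm⟩
    · exact Or.inr (Or.inl ⟨h1.symm, h2.symm⟩)
    · exact Or.inr (Or.inr ⟨h1.symm, h2.symm⟩)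
  loopless := by
    constructor
    rintro x (⟨_, h⟩ | ⟨_, h⟩ | ⟨h, _⟩)
    · exact H.irrefl h
    · exact G.irrefl h
    · exact G.irrefl h

/-- The lexicographic product `G ∘ H`. -/
def lexProd {α β : Type*} (G : SimpleGraph α) (H : SimpleGraph β) : SimpleGraph (α × β) where
  Adj x y := G.Adj x.1 y.1 ∨ (x.1 = y.1 ∧ H.Adj x.2 y.2)
  symm := by
    constructor
    rintro x y (h | ⟨h1, h2⟩)
    · exact Or.inl h.symm
    · exact Or.inr ⟨h1.symm, h2.symm⟩
  loopless := by
    constructor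
    rintro x (h | ⟨_, h⟩)
    · exact G.irrefl h
    · exact H.irrefl h

/-- The direct (tensor) product `G × H`. -/
def dirProd {α β : Type*} (G : SimpleGraph α) (H : SimpleGraph β) : SimpleGraph (α × β) where
  Adj x y := G.Adj x.1 y.1 ∧ H.Adj x.2 y.2
  symm := by
    constructor
    rintro x y ⟨h1, h2⟩
    exact ⟨h1.symm, h2.symm⟩
  loopless := by
    constructor
    rintro x ⟨h, _⟩
    exact G.irrefl h

/-!
In `G ∘ H` take a vertex `a` of `G` with distinct neighbours `b₁, …, b_k` and a vertex `x` of
`H` with distinct neighbours `y₁, …, y_k`. The branch sets `{(a, x)}` and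
`(a, yᵢ) – (bᵢ, x) – (bᵢ, yᵢ)`, coloured `1` exactly at the vertices `(bᵢ, x)`, form an odd
`K_{k+1}` minor: `(a, x)` sees `(a, yᵢ)` inside the fibre of `a`, and `(bᵢ, yᵢ)` sees `(a, yⱼ)`
because `bᵢ ∼ a`. Taking `k = min Δ(G) Δ(H)` gives the first bound. If one of the two stars has a
spare leaf, the vertex `(a, y_{k+1})` or `(b_{k+1}, x)` lies outside all branch sets and has a
colour-`0` neighbour in each of them, so it is a further branch set and `K_{k+2}` is an odd minor.
-/

namespace SimpleGraph

variable {V W ι ι' : Type*}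

section Star

variable (G : SimpleGraph V)

def starSubgraph (v : V) (S : Set V) (hS : S ⊆ G.neighborSet v) : G.Subgraph where
  verts := insert v S
  Adj p q := p = v ∧ q ∈ S ∨ q = v ∧ p ∈ S
  adj_sub := by
    rintro p q (⟨rfl, hq⟩ | ⟨rfl, hp⟩)
    exacts [hS hq, (hS hp).symm]
  edge_vert := by
    rintro p q (⟨rfl, -⟩ | ⟨-, hp⟩)
    exacts [Set.mem_insert _ _, Set.mem_insert_of_mem _ hp]
  symm := ⟨fun _ _ => Or.symm⟩

variable {G} {v : V} {S : Set V} {hS : S ⊆ G.neighborSet v}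

@[simp]
lemma starSubgraph_verts : (G.starSubgraph v S hS).verts = insert v S := rfl

@[simp]
lemma starSubgraph_adj {p q : V} :
    (G.starSubgraph v S hS).Adj p q ↔ p = v ∧ q ∈ S ∨ q = v ∧ p ∈ S := Iff.rfl

lemma coe_starSubgraph_eq_starGraph :
    (G.starSubgraph v S hS).coe = starGraph ⟨v, Set.mem_insert v S⟩ := by
  have hvS : v ∉ S := fun h => G.loopless.irrefl v (hS h)
  ext ⟨p, hp⟩ ⟨q, hq⟩
  simp only [Subgraph.coe_adj, starSubgraph_adj, starGraph_adj, ne_eq, Subtype.ext_iff]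
  rw [starSubgraph_verts, Set.mem_insert_iff] at hp hq
  constructor
  · rintro (⟨rfl, hqS⟩ | ⟨rfl, hpS⟩)
    exacts [⟨fun h => hvS (h ▸ hqS), .inl rfl⟩, ⟨fun h => hvS (h ▸ hpS), .inr rfl⟩]
  · rintro ⟨hne, rfl | rfl⟩
    · exact .inl ⟨rfl, hq.resolve_left (Ne.symm hne)⟩
    · exact .inr ⟨rfl, hp.resolve_left hne⟩

lemma isTree_coe_starSubgraph : (G.starSubgraph v S hS).coe.IsTree := by
  rw [coe_starSubgraph_eq_starGraph]
  exact isTree_starGraph _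

end Star

lemma IsOddMinorOf.card_le [Fintype V] [Fintype W] {H : SimpleGraph W} {G : SimpleGraph V}
    (h : IsOddMinorOf H G) : Fintype.card W ≤ Fintype.card V := by
  obtain ⟨T, -, hT, hdisj, -, -⟩ := h
  have hne (w : W) : ∃ v, v ∈ (T w).verts := by
    obtain ⟨⟨v, hv⟩⟩ := (hT w).connected.nonempty
    exact ⟨v, hv⟩
  choose f hf using hne
  refine Fintype.card_le_of_injective f fun w w' hff => ?_
  by_contra hne
  exact Set.disjoint_left.1 (hdisj hne) (hf w) (hff ▸ hf w')

lemma IsOddMinorOf.le_oddHadwiger [Fintype V] {G : SimpleGraph V} {r : ℕ}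
    (h : IsOddMinorOf (⊤ : SimpleGraph (Fin r)) G) : r ≤ oddHadwiger G :=
  le_csSup ⟨Fintype.card V, fun s hs => by simpa using hs.card_le⟩ h

structure OddCliqueModel (G : SimpleGraph V) (ι : Type*) where
  branch : ι → G.Subgraph
  color : V → Fin 2
  isTree_branch (i : ι) : (branch i).coe.IsTree
  pairwise_disjoint : Pairwise fun i j => Disjoint (branch i).verts (branch j).verts
  color_ne_of_adj (i : ι) {p q : V} : (branch i).Adj p q → color p ≠ color q
  exists_monochromatic_adj : Pairwise fun i j =>
    ∃ p q, p ∈ (branch i).verts ∧ q ∈ (branch j).verts ∧ G.Adj p q ∧ color p = color q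

namespace OddCliqueModel

variable {G : SimpleGraph V}

lemma isOddMinorOf (M : OddCliqueModel G ι) : IsOddMinorOf (⊤ : SimpleGraph ι) G :=
  ⟨M.branch, M.color, M.isTree_branch, M.pairwise_disjoint, fun i _ _ => M.color_ne_of_adj i,
    fun _ _ hij => M.exists_monochromatic_adj hij⟩

def comap (M : OddCliqueModel G ι) (f : ι' ↪ ι) : OddCliqueModel G ι' where
  branch := M.branch ∘ f
  color := M.color
  isTree_branch i := M.isTree_branch (f i)
  pairwise_disjoint := M.pairwise_disjoint.comp_of_injective f.injective
  color_ne_of_adj i := M.color_ne_of_adj (f i)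
  exists_monochromatic_adj := M.exists_monochromatic_adj.comp_of_injective f.injective

lemma card_le_oddHadwiger [Fintype V] [Fintype ι] (M : OddCliqueModel G ι) :
    Fintype.card ι ≤ oddHadwiger G :=
  (M.comap (Fintype.equivFin ι).symm.toEmbedding).isOddMinorOf.le_oddHadwiger

open Classical in
noncomputable def extend (M : OddCliqueModel G ι) (z : V) (hz : ∀ i, z ∉ (M.branch i).verts)
    (κ : Fin 2) (hzκ : ∀ i, ∃ p ∈ (M.branch i).verts, G.Adj z p ∧ M.color p = κ) :
    OddCliqueModel G (Option ι) where
  branch o := o.elim (G.singletonSubgraph z) M.branch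
  color := Function.update M.color z κ
  isTree_branch
    | none => IsTree.coe_singletonSubgraph G z
    | some i => M.isTree_branch i
  pairwise_disjoint := by
    rintro (_ | i) (_ | j) hij
    · exact absurd rfl hij
    · exact Set.disjoint_singleton_left.2 (hz j)
    · exact Set.disjoint_singleton_right.2 (hz i)
    · exact M.pairwise_disjoint fun h => hij (congrArg some h)
  color_ne_of_adj := by
    rintro (_ | i) p q h
    · simp at h
    · rw [Function.update_of_ne (ne_of_mem_of_not_mem ((M.branch i).edge_vert h) (hz i)),
        Function.update_of_ne (ne_of_mem_of_not_mem ((M.branch i).edge_vert h.symm) (hz i))]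
      exact M.color_ne_of_adj i h
  exists_monochromatic_adj := by
    rintro (_ | i) (_ | j) hij
    · exact absurd rfl hij
    · obtain ⟨p, hp, hzp, hpκ⟩ := hzκ j
      refine ⟨z, p, rfl, hp, hzp, ?_⟩
      rw [Function.update_self, Function.update_of_ne (ne_of_mem_of_not_mem hp (hz j)), hpκ]
    · obtain ⟨p, hp, hzp, hpκ⟩ := hzκ i
      refine ⟨p, z, hp, rfl, hzp.symm, ?_⟩
      rw [Function.update_self, Function.update_of_ne (ne_of_mem_of_not_mem hp (hz i)), hpκ]
    · obtain ⟨p, q, hp, hq, hpq, hc⟩ := M.exists_monochromatic_adj fun h => hij (congrArg some h)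
      refine ⟨p, q, hp, hq, hpq, ?_⟩
      rwa [Function.update_of_ne (ne_of_mem_of_not_mem hp (hz i)),
        Function.update_of_ne (ne_of_mem_of_not_mem hq (hz j))]

@[simp]
lemma extend_color_self (M : OddCliqueModel G ι) {z : V} {hz : ∀ i, z ∉ (M.branch i).verts}
    {κ : Fin 2} {hzκ : ∀ i, ∃ p ∈ (M.branch i).verts, G.Adj z p ∧ M.color p = κ} :
    (M.extend z hz κ hzκ).color z = κ := by
  simp [extend]

end OddCliqueModel

section LexProd

variable {G : SimpleGraph V} {H : SimpleGraph W} {a : V} {x : W} {b : ι → V} {y : ι → W}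

namespace OddCliqueModel

open Classical in
noncomputable def lexProdPetals (hb : Function.Injective b) (hy : Function.Injective y)
    (hab : ∀ i, G.Adj a (b i)) (hxy : ∀ i, H.Adj x (y i)) :
    OddCliqueModel (lexProd G H) ι where
  branch i := (lexProd G H).starSubgraph (b i, x) {(a, y i), (b i, y i)}
    (Set.pair_subset (Or.inl (hab i).symm) (Or.inr ⟨rfl, hxy i⟩))
  color p := if p.2 = x then 1 else 0
  isTree_branch _ := isTree_coe_starSubgraph
  pairwise_disjoint i j hij := by
    simp [Set.disjoint_left, hb.eq_iff, hy.eq_iff, hij, (hab j).ne, (hxy j).ne, (hab i).ne',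
      (hxy i).ne']
  color_ne_of_adj i p q h := by
    have hyx := (hxy i).ne'
    simp only [starSubgraph_adj, Set.mem_insert_iff, Set.mem_singleton_iff] at h
    rcases h with ⟨rfl, rfl | rfl⟩ | ⟨rfl, rfl | rfl⟩ <;> simp [hyx]
  exists_monochromatic_adj i j _ :=
    ⟨(b i, y i), (a, y j), by simp, by simp, Or.inl (hab i).symm,
      by simp [(hxy i).ne', (hxy j).ne']⟩

noncomputable def lexProdStar (hb : Function.Injective b) (hy : Function.Injective y)
    (hab : ∀ i, G.Adj a (b i)) (hxy : ∀ i, H.Adj x (y i)) :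
    OddCliqueModel (lexProd G H) (Option ι) :=
  (lexProdPetals hb hy hab hxy).extend (a, x)
    (fun i => by simp [lexProdPetals, (hab i).ne, (hxy i).ne]) 0
    (fun i => ⟨(a, y i), by simp [lexProdPetals], Or.inr ⟨rfl, hxy i⟩,
      by simp [lexProdPetals, (hxy i).ne']⟩)

section lexProdStar

variable (hb : Function.Injective b) (hy : Function.Injective y)
  (hab : ∀ i, G.Adj a (b i)) (hxy : ∀ i, H.Adj x (y i))

@[simp]
lemma lexProdStar_branch_none_verts :
    ((lexProdStar hb hy hab hxy).branch none).verts = {(a, x)} := rfl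

@[simp]
lemma lexProdStar_branch_some_verts (i : ι) :
    ((lexProdStar hb hy hab hxy).branch (some i)).verts = {(b i, x), (a, y i), (b i, y i)} := rfl

@[simp]
lemma lexProdStar_color_self : (lexProdStar hb hy hab hxy).color (a, x) = 0 :=
  extend_color_self _

lemma lexProdStar_color_of_snd_ne {p : V × W} (hp : p.2 ≠ x) :
    (lexProdStar hb hy hab hxy).color p = 0 := by
  have hpax : p ≠ (a, x) := fun h => hp (congrArg Prod.snd h)
  simp [lexProdStar, extend, lexProdPetals, hpax, hp]

end lexProdStar

end OddCliqueModel

open OddCliqueModel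

variable [Fintype V] [Fintype W]

theorem card_add_one_le_oddHadwiger_lexProd [Fintype ι] (hb : Function.Injective b)
    (hy : Function.Injective y) (hab : ∀ i, G.Adj a (b i)) (hxy : ∀ i, H.Adj x (y i)) :
    Fintype.card ι + 1 ≤ oddHadwiger (lexProd G H) := by
  simpa using (lexProdStar hb hy hab hxy).card_le_oddHadwiger

theorem card_add_two_le_oddHadwiger_lexProd_of_snd [Fintype ι] {y : Option ι → W}
    (hb : Function.Injective b) (hy : Function.Injective y)
    (hab : ∀ i, G.Adj a (b i)) (hxy : ∀ o, H.Adj x (y o)) :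
    Fintype.card ι + 2 ≤ oddHadwiger (lexProd G H) := by
  let M := lexProdStar hb (hy.comp (Option.some_injective ι)) hab fun i => hxy (some i)
  have hz o : (a, y none) ∉ (M.branch o).verts := by
    cases o <;> simp [M, (hxy none).ne', (hab _).ne, hy.ne]
  have hzκ o : ∃ p ∈ (M.branch o).verts, (lexProd G H).Adj (a, y none) p ∧ M.color p = 0 := by
    cases o with
    | none => exact ⟨(a, x), by simp [M], Or.inr ⟨rfl, (hxy none).symm⟩, by simp [M]⟩
    | some i => exact ⟨(b i, y (some i)), by simp [M], Or.inl (hab i),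
        lexProdStar_color_of_snd_ne _ _ _ _ (hxy (some i)).ne'⟩
  have := (M.extend _ hz 0 hzκ).card_le_oddHadwiger
  simp only [Fintype.card_option] at this
  omega

theorem card_add_two_le_oddHadwiger_lexProd_of_fst [Fintype ι] {b : Option ι → V}
    (hb : Function.Injective b) (hy : Function.Injective y)
    (hab : ∀ o, G.Adj a (b o)) (hxy : ∀ i, H.Adj x (y i)) :
    Fintype.card ι + 2 ≤ oddHadwiger (lexProd G H) := by
  let M := lexProdStar (hb.comp (Option.some_injective ι)) hy (fun i => hab (some i)) hxy
  have hz o : (b none, x) ∉ (M.branch o).verts := by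
    cases o <;> simp [M, (hab none).ne', hb.ne]
  have hzκ o : ∃ p ∈ (M.branch o).verts, (lexProd G H).Adj (b none, x) p ∧ M.color p = 0 := by
    cases o with
    | none => exact ⟨(a, x), by simp [M], Or.inl (hab none).symm, by simp [M]⟩
    | some i => exact ⟨(a, y i), by simp [M], Or.inl (hab none).symm,
        lexProdStar_color_of_snd_ne _ _ _ _ (hxy i).ne'⟩
  have := (M.extend _ hz 0 hzκ).card_le_oddHadwiger
  simp only [Fintype.card_option] at this
  omega

end LexProd

lemma exists_adj_injective_of_card_le_maxDegree [Fintype V] [Nonempty V] (G : SimpleGraph V)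
    [DecidableRel G.Adj] [Fintype ι] (h : Fintype.card ι ≤ G.maxDegree) :
    ∃ (a : V) (b : ι → V), Function.Injective b ∧ ∀ i, G.Adj a (b i) := by
  obtain ⟨a, ha⟩ := G.exists_maximal_degree_vertex
  obtain ⟨f⟩ := Function.Embedding.nonempty_of_card_le
    (h.trans (ha.trans (G.card_neighborSet_eq_degree a).symm).le)
  exact ⟨a, fun i => f i, fun i j hij => f.injective (Subtype.ext hij), fun i => (f i).2⟩

end SimpleGraph

theorem stmt_17 {V W : Type*} [Fintype V] [Fintype W] [Nonempty V] [Nonempty W]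
    (G : SimpleGraph V) (H : SimpleGraph W)
    [DecidableRel G.Adj] [DecidableRel H.Adj] :
    (G.maxDegree = H.maxDegree → oddHadwiger (lexProd G H) ≥ G.maxDegree + 1) ∧
    (G.maxDegree ≠ H.maxDegree →
      oddHadwiger (lexProd G H) ≥ min G.maxDegree H.maxDegree + 2) := by
  refine ⟨fun h => ?_, fun h => ?_⟩
  · obtain ⟨a, b, hb, hab⟩ := G.exists_adj_injective_of_card_le_maxDegree (ι := Fin G.maxDegree)
      (by simp)
    obtain ⟨x, y, hy, hxy⟩ := H.exists_adj_injective_of_card_le_maxDegree (ι := Fin G.maxDegree)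
      (by simp [h])
    simpa using card_add_one_le_oddHadwiger_lexProd hb hy hab hxy
  rcases h.lt_or_gt with hlt | hlt
  · obtain ⟨a, b, hb, hab⟩ := G.exists_adj_injective_of_card_le_maxDegree (ι := Fin G.maxDegree)
      (by simp)
    obtain ⟨x, y, hy, hxy⟩ := H.exists_adj_injective_of_card_le_maxDegree
      (ι := Option (Fin G.maxDegree)) (by simpa using hlt)
    simpa [hlt.le] using card_add_two_le_oddHadwiger_lexProd_of_snd hb hy hab hxy
  · obtain ⟨a, b, hb, hab⟩ := G.exists_adj_injective_of_card_le_maxDegree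
      (ι := Option (Fin H.maxDegree)) (by simpa using hlt)
    obtain ⟨x, y, hy, hxy⟩ := H.exists_adj_injective_of_card_le_maxDegree (ι := Fin H.maxDegree)
      (by simp)
    simpa [hlt.le] using card_add_two_le_oddHadwiger_lexProd_of_fst hb hy hab hxy
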